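/- Let ω ⊆ ℝ² be a bounded open set, M > 0 and 0 < α < 1. Let q : ℝ² × ℝ → ℝ be measurable with |q(x',x₃)| ≤ 2M for all (x',x₃), with q(x',x₃) = 0 whenever x' ∉ cl(ω), and satisfying the uniform Hölder condition in the third variable |q(x',a) − q(x',b)| ≤ 2M·|a − b|^α for all x' ∈ ℝ², a, b ∈ ℝ. Then there exists a constant C > 0, depending only on ω, M, α, φ and h, such that for every δ ∈ (0,1) and every y₃ ∈ ℝ one has (∫_{ℝ²} |R_δ[q](y',y₃) − S_δ[q](y',y₃)|² dy')^{1/2} ≤ C·δ^α. -/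

import Mathlib

open MeasureTheory Metric Set

noncomputable def Phid (φ : EuclideanSpace ℝ (Fin 2) → ℝ) (δ : ℝ)
    (x' y' : EuclideanSpace ℝ (Fin 2)) : ℝ := δ⁻¹ * φ (δ⁻¹ • (x' - y'))

noncomputable def hdel (h : ℝ → ℝ) (δ x3 y3 : ℝ) : ℝ :=
  δ ^ (-(1 / 2) : ℝ) * h ((x3 - y3) / δ)

noncomputable def Rdel (φ : EuclideanSpace ℝ (Fin 2) → ℝ) (h : ℝ → ℝ)
    (q : EuclideanSpace ℝ (Fin 2) → ℝ → ℝ) (δ : ℝ)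
    (y' : EuclideanSpace ℝ (Fin 2)) (y3 : ℝ) : ℝ :=
  ∫ x3 : ℝ, ∫ x' : EuclideanSpace ℝ (Fin 2),
    (Phid φ δ x' y') ^ 2 * (hdel h δ x3 y3) ^ 2 * q x' x3

noncomputable def Sdel (φ : EuclideanSpace ℝ (Fin 2) → ℝ)
    (q : EuclideanSpace ℝ (Fin 2) → ℝ → ℝ) (δ : ℝ)
    (y' : EuclideanSpace ℝ (Fin 2)) (y3 : ℝ) : ℝ :=
  ∫ x' : EuclideanSpace ℝ (Fin 2), (Phid φ δ x' y') ^ 2 * q x' y3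

/-!
Fix `y'` and write `A(x₃) = S_δ[q](y', x₃)`. Since `Φ_δ(·, y')²` is a probability density,
`A` is bounded by `2M` and inherits the Hölder bound of `q` in `x₃`; and `R_δ[q](y', y₃)` is
the average of `A` against the probability density `h_δ(·, y₃)²`, which lives on
`|x₃ - y₃| ≤ δ`. Hence `|R_δ - S_δ| ≤ 2M δ^α` pointwise. Both vanish unless `y'` lies within
distance `δ < 1` of `cl ω`, so the `L²` norm is at most `2M δ^α` times the square root of the
area of the `1`-thickening of `cl ω`.
-/

open Filter Topology Module

section Averaging

variable {X : Type*} [MeasurableSpace X] {μ : Measure X} {k g : X → ℝ} {B : ℝ}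

theorem abs_mul_le_of_ne_zero_imp {a b : ℝ} (ha : 0 ≤ a) (hb : a ≠ 0 → |b| ≤ B) :
    |a * b| ≤ B * a := by
  rcases eq_or_ne a 0 with rfl | ha0
  · simp
  · rw [abs_mul, abs_of_nonneg ha, mul_comm]
    exact mul_le_mul_of_nonneg_right (hb ha0) ha

theorem integrable_mul_of_abs_le_on_support (hk : Integrable k μ) (hk0 : 0 ≤ k)
    (hg : AEStronglyMeasurable g μ) (hgB : ∀ x, k x ≠ 0 → |g x| ≤ B) :
    Integrable (fun x => k x * g x) μ :=
  (hk.const_mul B).mono' (hk.1.mul hg)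
    (ae_of_all _ fun x => abs_mul_le_of_ne_zero_imp (hk0 x) (hgB x))

theorem abs_integral_mul_le_of_integral_eq_one (hk0 : 0 ≤ k) (hk1 : ∫ x, k x ∂μ = 1)
    (hg : AEStronglyMeasurable g μ) (hgB : ∀ x, k x ≠ 0 → |g x| ≤ B) :
    |∫ x, k x * g x ∂μ| ≤ B := by
  have hk : Integrable k μ := .of_integral_ne_zero (by rw [hk1]; exact one_ne_zero)
  calc |∫ x, k x * g x ∂μ| ≤ ∫ x, |k x * g x| ∂μ := abs_integral_le_integral_abs
    _ ≤ ∫ x, B * k x ∂μ :=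
        integral_mono (integrable_mul_of_abs_le_on_support hk hk0 hg hgB).abs
          (hk.const_mul B) fun x => abs_mul_le_of_ne_zero_imp (hk0 x) (hgB x)
    _ = B := by rw [integral_const_mul, hk1, mul_one]

end Averaging

theorem continuous_of_abs_sub_le_mul_rpow {X : Type*} [PseudoMetricSpace X] {f : X → ℝ}
    {L α : ℝ} (hα : 0 < α) (hf : ∀ a b, |f a - f b| ≤ L * dist a b ^ α) : Continuous f := by
  refine continuous_iff_continuousAt.2 fun a => tendsto_iff_dist_tendsto_zero.2 ?_
  have hlim : Tendsto (fun x => L * dist x a ^ α) (𝓝 a) (𝓝 (L * dist a a ^ α)) :=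
    ((continuous_id.dist continuous_const).rpow_const fun _ => Or.inr hα.le).const_mul L
      |>.tendsto a
  rw [dist_self, Real.zero_rpow hα.ne', mul_zero] at hlim
  exact squeeze_zero (fun _ => dist_nonneg) (fun x => hf x a) hlim

theorem integral_comp_inv_smul_sub {E : Type*} [NormedAddCommGroup E] [NormedSpace ℝ E]
    [MeasurableSpace E] [BorelSpace E] [FiniteDimensional ℝ E] (μ : Measure E)
    [μ.IsAddHaarMeasure] (f : E → ℝ) {δ : ℝ} (hδ : 0 ≤ δ) (y : E) :
    ∫ x, f (δ⁻¹ • (x - y)) ∂μ = δ ^ finrank ℝ E * ∫ x, f x ∂μ := by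
  rw [integral_sub_right_eq_self (fun x => f (δ⁻¹ • x)) y,
    Measure.integral_comp_inv_smul_of_nonneg μ f hδ, smul_eq_mul]

theorem dist_le_of_comp_inv_smul_sub_ne_zero {E F : Type*} [SeminormedAddCommGroup E]
    [NormedSpace ℝ E] [Zero F] {f : E → F} (hf : Function.support f ⊆ closedBall 0 1)
    {δ : ℝ} (hδ : 0 < δ) {x y : E} (hxy : f (δ⁻¹ • (x - y)) ≠ 0) : dist x y ≤ δ := by
  have := hf hxy
  rwa [mem_closedBall, dist_zero_right, norm_smul, Real.norm_eq_abs, abs_inv,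
    abs_of_pos hδ, inv_mul_le_iff₀ hδ, mul_one, ← dist_eq_norm] at this

local notation "ℝ²" => EuclideanSpace ℝ (Fin 2)

section Kernels

variable {δ : ℝ}

theorem integral_Phid_sq (φ : ℝ² → ℝ) (hδ : 0 < δ) (y' : ℝ²) :
    ∫ x', Phid φ δ x' y' ^ 2 = ∫ x, φ x ^ 2 := by
  simp_rw [Phid, mul_pow]
  rw [integral_const_mul, integral_comp_inv_smul_sub volume (fun x => φ x ^ 2) hδ.le,
    finrank_euclideanSpace_fin, ← mul_assoc, ← mul_pow, inv_mul_cancel₀ hδ.ne', one_pow,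
    one_mul]

theorem integral_hdel_sq (h : ℝ → ℝ) (hδ : 0 < δ) (y3 : ℝ) :
    ∫ x3, hdel h δ x3 y3 ^ 2 = ∫ x, h x ^ 2 := by
  have hcoef : (δ ^ (-(1 / 2) : ℝ)) ^ 2 = δ⁻¹ := by
    rw [← Real.rpow_natCast, ← Real.rpow_mul hδ.le]
    norm_num [Real.rpow_neg_one]
  have hscale := integral_comp_inv_smul_sub volume (fun x => h x ^ 2) hδ.le y3
  simp only [smul_eq_mul, finrank_self, pow_one] at hscale
  simp_rw [hdel, mul_pow, hcoef, div_eq_inv_mul]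
  rw [integral_const_mul, hscale, ← mul_assoc, inv_mul_cancel₀ hδ.ne', one_mul]

theorem dist_le_of_Phid_ne_zero {φ : ℝ² → ℝ} (hφ : Function.support φ ⊆ closedBall 0 1)
    (hδ : 0 < δ) {x' y' : ℝ²} (hne : Phid φ δ x' y' ≠ 0) : dist x' y' ≤ δ :=
  dist_le_of_comp_inv_smul_sub_ne_zero hφ hδ (right_ne_zero_of_mul hne)

theorem abs_sub_le_of_hdel_ne_zero {h : ℝ → ℝ} (hh : Function.support h ⊆ Icc (-1) 1)
    (hδ : 0 < δ) {x3 y3 : ℝ} (hne : hdel h δ x3 y3 ≠ 0) : |x3 - y3| ≤ δ := by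
  rw [← Real.dist_eq]
  refine dist_le_of_comp_inv_smul_sub_ne_zero (f := h) ?_ hδ ?_
  · simpa [Real.closedBall_eq_Icc] using hh
  · simpa [div_eq_inv_mul] using right_ne_zero_of_mul hne

end Kernels

section Averages

variable {φ : ℝ² → ℝ} {h : ℝ → ℝ} {q : ℝ² → ℝ → ℝ} {δ B L α : ℝ}

theorem Rdel_eq_integral_hdel_sq_mul_Sdel (y' : ℝ²) (y3 : ℝ) :
    Rdel φ h q δ y' y3 = ∫ x3, hdel h δ x3 y3 ^ 2 * Sdel φ q δ y' x3 := by
  simp_rw [Rdel, Sdel, ← integral_const_mul, mul_left_comm, mul_assoc]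

theorem Sdel_sub_Sdel_eq_integral (hφ1 : ∫ x, φ x ^ 2 = 1) (hδ : 0 < δ)
    (hq : ∀ x3, AEStronglyMeasurable (fun x' => q x' x3))
    (hqB : ∀ x' x3, |q x' x3| ≤ B) (y' : ℝ²) (a b : ℝ) :
    Sdel φ q δ y' a - Sdel φ q δ y' b = ∫ x', Phid φ δ x' y' ^ 2 * (q x' a - q x' b) := by
  have hk : Integrable fun x' => Phid φ δ x' y' ^ 2 :=
    .of_integral_ne_zero (by rw [integral_Phid_sq φ hδ, hφ1]; exact one_ne_zero)
  have hint (x3 : ℝ) : Integrable fun x' => Phid φ δ x' y' ^ 2 * q x' x3 :=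
    integrable_mul_of_abs_le_on_support hk (fun _ => sq_nonneg _) (hq x3)
      fun x' _ => hqB x' x3
  simp_rw [Sdel, mul_sub]
  exact (integral_sub (hint a) (hint b)).symm

theorem abs_Sdel_sub_Sdel_le (hφ1 : ∫ x, φ x ^ 2 = 1) (hδ : 0 < δ)
    (hq : ∀ x3, AEStronglyMeasurable (fun x' => q x' x3))
    (hqB : ∀ x' x3, |q x' x3| ≤ B) (hqH : ∀ x' a b, |q x' a - q x' b| ≤ L * |a - b| ^ α)
    (y' : ℝ²) (a b : ℝ) :
    |Sdel φ q δ y' a - Sdel φ q δ y' b| ≤ L * |a - b| ^ α := by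
  rw [Sdel_sub_Sdel_eq_integral hφ1 hδ hq hqB]
  exact abs_integral_mul_le_of_integral_eq_one (fun _ => sq_nonneg _)
    ((integral_Phid_sq φ hδ y').trans hφ1) ((hq a).sub (hq b)) fun x' _ => hqH x' a b

theorem abs_Rdel_sub_Sdel_le (hφ1 : ∫ x, φ x ^ 2 = 1)
    (hh : Function.support h ⊆ Icc (-1) 1) (hh1 : ∫ x, h x ^ 2 = 1) (hδ : 0 < δ)
    (hα : 0 < α) (hq : ∀ x3, AEStronglyMeasurable (fun x' => q x' x3))
    (hqB : ∀ x' x3, |q x' x3| ≤ B) (hqH : ∀ x' a b, |q x' a - q x' b| ≤ L * |a - b| ^ α)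
    (y' : ℝ²) (y3 : ℝ) :
    |Rdel φ h q δ y' y3 - Sdel φ q δ y' y3| ≤ L * δ ^ α := by
  have hL : 0 ≤ L := by simpa using (abs_nonneg _).trans (hqH 0 1 0)
  have hS_holder := abs_Sdel_sub_Sdel_le hφ1 hδ hq hqB hqH y'
  have hS_cont : Continuous fun x3 => Sdel φ q δ y' x3 :=
    continuous_of_abs_sub_le_mul_rpow hα fun a b => by
      simpa only [Real.dist_eq] using hS_holder a b
  have hk1 : ∫ x3, hdel h δ x3 y3 ^ 2 = 1 := (integral_hdel_sq h hδ y3).trans hh1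
  have hk : Integrable fun x3 => hdel h δ x3 y3 ^ 2 :=
    .of_integral_ne_zero (by rw [hk1]; exact one_ne_zero)
  have hR_int : Integrable fun x3 => hdel h δ x3 y3 ^ 2 * Sdel φ q δ y' x3 :=
    integrable_mul_of_abs_le_on_support hk (fun _ => sq_nonneg _) hS_cont.aestronglyMeasurable
      fun x3 _ => abs_integral_mul_le_of_integral_eq_one (fun _ => sq_nonneg _)
        ((integral_Phid_sq φ hδ y').trans hφ1) (hq x3) fun x' _ => hqB x' x3
  have hS_eq : Sdel φ q δ y' y3 = ∫ x3, hdel h δ x3 y3 ^ 2 * Sdel φ q δ y' y3 := by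
    rw [integral_mul_const, hk1, one_mul]
  rw [Rdel_eq_integral_hdel_sq_mul_Sdel, hS_eq, ← integral_sub hR_int (hk.mul_const _)]
  simp_rw [← mul_sub]
  refine abs_integral_mul_le_of_integral_eq_one (fun _ => sq_nonneg _) hk1
    (hS_cont.aestronglyMeasurable.sub aestronglyMeasurable_const) fun x3 hx3 => ?_
  have hclose : |x3 - y3| ≤ δ :=
    abs_sub_le_of_hdel_ne_zero hh hδ (pow_ne_zero_iff two_ne_zero |>.1 hx3)
  calc |Sdel φ q δ y' x3 - Sdel φ q δ y' y3| ≤ L * |x3 - y3| ^ α := hS_holder x3 y3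
    _ ≤ L * δ ^ α := by gcongr

theorem Sdel_eq_zero_of_notMem_cthickening {T : Set ℝ²}
    (hφ : Function.support φ ⊆ closedBall 0 1) (hδ : 0 < δ)
    (hqT : ∀ x' ∉ T, ∀ x3, q x' x3 = 0) {y' : ℝ²} (hy' : y' ∉ cthickening δ T) (x3 : ℝ) :
    Sdel φ q δ y' x3 = 0 := by
  have hzero (x' : ℝ²) : Phid φ δ x' y' ^ 2 * q x' x3 = 0 := by
    by_cases hx' : x' ∈ T
    · have hPhi : Phid φ δ x' y' = 0 := by
        by_contra hne
        exact hy' (mem_cthickening_of_dist_le y' x' δ T hx'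
          (dist_comm x' y' ▸ dist_le_of_Phid_ne_zero hφ hδ hne))
      rw [hPhi, zero_pow two_ne_zero, zero_mul]
    · rw [hqT x' hx', mul_zero]
  simp_rw [Sdel, hzero, integral_zero]

end Averages

theorem sqrt_integral_sq_le_of_abs_le {X : Type*} [MeasurableSpace X] {μ : Measure X}
    {f : X → ℝ} {K : Set X} {c : ℝ} (hK : MeasurableSet K) (hKμ : μ K ≠ ⊤) (hc : 0 ≤ c)
    (hf : ∀ x, |f x| ≤ c) (hfK : ∀ x ∉ K, f x = 0) :
    √(∫ x, f x ^ 2 ∂μ) ≤ c * √(μ.real K) := by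
  have hbound : ∫ x, f x ^ 2 ∂μ ≤ ∫ x, K.indicator (fun _ => c ^ 2) x ∂μ := by
    refine integral_mono_of_nonneg (ae_of_all _ fun x => sq_nonneg _)
      ((integrable_indicator_iff hK).2 (integrableOn_const hKμ)) (ae_of_all _ fun x => ?_)
    by_cases hx : x ∈ K
    · rw [indicator_of_mem hx]
      simpa only [sq_abs] using pow_le_pow_left₀ (abs_nonneg _) (hf x) 2
    · simp [hfK x hx, hx]
  rw [integral_indicator_const _ hK, smul_eq_mul] at hbound
  calc √(∫ x, f x ^ 2 ∂μ) ≤ √(c ^ 2 * μ.real K) := Real.sqrt_le_sqrt (by linarith)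
    _ = c * √(μ.real K) := by rw [Real.sqrt_mul (sq_nonneg c), Real.sqrt_sq hc]

theorem stmt_1_general
    (ω : Set (EuclideanSpace ℝ (Fin 2)))
    (hω_bdd : Bornology.IsBounded ω)
    (M α : ℝ) (hM : 0 < M) (hα0 : 0 < α)
    (φ : EuclideanSpace ℝ (Fin 2) → ℝ)
    (hφ_supp : Function.support φ ⊆ Metric.closedBall 0 1)
    (hφ_int : ∫ x : EuclideanSpace ℝ (Fin 2), (φ x) ^ 2 = 1)
    (h : ℝ → ℝ)
    (hh_supp : Function.support h ⊆ Set.Icc (-1 : ℝ) 1)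
    (hh_int : ∫ x : ℝ, (h x) ^ 2 = 1)
    (q : EuclideanSpace ℝ (Fin 2) → ℝ → ℝ)
    (hq_meas : Measurable (fun p : EuclideanSpace ℝ (Fin 2) × ℝ => q p.1 p.2))
    (hq_bdd : ∀ (x' : EuclideanSpace ℝ (Fin 2)) (x3 : ℝ), |q x' x3| ≤ 2 * M)
    (hq_zero : ∀ x' ∉ closure ω, ∀ x3 : ℝ, q x' x3 = 0)
    (hq_hold : ∀ (x' : EuclideanSpace ℝ (Fin 2)) (a b : ℝ),
      |q x' a - q x' b| ≤ 2 * M * |a - b| ^ α) :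
    ∃ C > 0, ∀ δ ∈ Set.Ioo (0 : ℝ) 1, ∀ y3 : ℝ,
      Real.sqrt (∫ y' : EuclideanSpace ℝ (Fin 2),
          (Rdel φ h q δ y' y3 - Sdel φ q δ y' y3) ^ 2)
        ≤ C * δ ^ α := by
  set K := cthickening 1 (closure ω)
  have hK : MeasurableSet K := isClosed_cthickening.measurableSet
  have hK_fin : volume K ≠ ⊤ := hω_bdd.closure.cthickening.measure_lt_top.ne
  refine ⟨2 * M * (√(volume.real K) + 1), by positivity, fun δ ⟨hδ0, hδ1⟩ y3 => ?_⟩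
  have hq_slice (x3 : ℝ) : AEStronglyMeasurable fun x' => q x' x3 :=
    (hq_meas.comp (measurable_id.prodMk measurable_const)).aestronglyMeasurable
  have hS_zero {y'} (hy' : y' ∉ K) (x3 : ℝ) : Sdel φ q δ y' x3 = 0 :=
    Sdel_eq_zero_of_notMem_cthickening hφ_supp hδ0 hq_zero
      (fun hy => hy' (cthickening_mono hδ1.le _ hy)) x3
  calc √(∫ y', (Rdel φ h q δ y' y3 - Sdel φ q δ y' y3) ^ 2)
      ≤ 2 * M * δ ^ α * √(volume.real K) :=
        sqrt_integral_sq_le_of_abs_le hK hK_fin (by positivity)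
          (fun y' => abs_Rdel_sub_Sdel_le hφ_int hh_supp hh_int hδ0 hα0 hq_slice hq_bdd
            hq_hold y' y3)
          fun y' hy' => by simp [Rdel_eq_integral_hdel_sq_mul_Sdel, hS_zero hy']
    _ ≤ 2 * M * (√(volume.real K) + 1) * δ ^ α := by
        nlinarith [Real.sqrt_nonneg (volume.real K), Real.rpow_pos_of_pos hδ0 α]

theorem stmt_1
    (ω : Set (EuclideanSpace ℝ (Fin 2))) (hω_open : IsOpen ω)
    (hω_bdd : Bornology.IsBounded ω)
    (M α : ℝ) (hM : 0 < M) (hα0 : 0 < α) (hα1 : α < 1)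
    (φ : EuclideanSpace ℝ (Fin 2) → ℝ) (hφ_smooth : ContDiff ℝ (⊤ : ℕ∞) φ)
    (hφ_supp : Function.support φ ⊆ Metric.closedBall 0 1)
    (hφ_int : ∫ x : EuclideanSpace ℝ (Fin 2), (φ x) ^ 2 = 1)
    (h : ℝ → ℝ) (hh_smooth : ContDiff ℝ (⊤ : ℕ∞) h)
    (hh_supp : Function.support h ⊆ Set.Icc (-1 : ℝ) 1)
    (hh_int : ∫ x : ℝ, (h x) ^ 2 = 1)
    (q : EuclideanSpace ℝ (Fin 2) → ℝ → ℝ)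
    (hq_meas : Measurable (fun p : EuclideanSpace ℝ (Fin 2) × ℝ => q p.1 p.2))
    (hq_bdd : ∀ (x' : EuclideanSpace ℝ (Fin 2)) (x3 : ℝ), |q x' x3| ≤ 2 * M)
    (hq_zero : ∀ x' ∉ closure ω, ∀ x3 : ℝ, q x' x3 = 0)
    (hq_hold : ∀ (x' : EuclideanSpace ℝ (Fin 2)) (a b : ℝ),
      |q x' a - q x' b| ≤ 2 * M * |a - b| ^ α) :
    ∃ C > 0, ∀ δ ∈ Set.Ioo (0 : ℝ) 1, ∀ y3 : ℝ,
      Real.sqrt (∫ y' : EuclideanSpace ℝ (Fin 2),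
          (Rdel φ h q δ y' y3 - Sdel φ q δ y' y3) ^ 2)
        ≤ C * δ ^ α :=
  stmt_1_general ω hω_bdd M α hM hα0 φ hφ_supp hφ_int h hh_supp hh_int q hq_meas hq_bdd hq_zero
    hq_hold
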